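/- arXiv:1909.13510 — 3 statements merged into one kernel-verified Lean document; each statement's English description precedes it below -/
import Mathlib

section
/- Let 1 < p < ∞ and a ∈ L^∞(ℝ;ℂ). Suppose T : L^p(ℝ;ℂ) → L^p(ℝ;ℂ) is a bounded linear operator such that T f = F⁻¹(a · F f) for every f ∈ L²(ℝ;ℂ) ∩ L^p(ℝ;ℂ) (i.e., a is a Fourier multiplier on L^p(ℝ) and T = W⁰(a)). If T is compact, then a = 0 almost everywhere on ℝ. -/
open MeasureTheory Filter Set
open scoped ENNReal NNReal

/-- The Fourier transform `(Ff)(x) = ∫_ℝ f(t) e^{itx} dt` (defined whenever `f` is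
integrable). -/
noncomputable def Ftransform (f : ℝ → ℂ) (x : ℝ) : ℂ :=
  ∫ t : ℝ, f t * Complex.exp (Complex.I * t * x)

/-- The inverse Fourier transform `(F⁻¹g)(t) = (1/(2π)) ∫_ℝ g(x) e^{-itx} dx`. -/
noncomputable def Finv (g : ℝ → ℂ) (t : ℝ) : ℂ :=
  (2 * Real.pi)⁻¹ • ∫ x : ℝ, g x * Complex.exp (-(Complex.I * t * x))

section AuxLemmas

lemma gaussianC_memLp {b : ℝ} (hb : 0 < b) (q : ℝ≥0∞) (hq0 : q ≠ 0) (hqtop : q ≠ ∞) :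
    MemLp (fun x : ℝ => Complex.exp (-(b : ℂ) * (x : ℂ) ^ 2)) q volume := by
  have hcont : Continuous fun x : ℝ => Complex.exp (-(b : ℂ) * (x : ℂ) ^ 2) := by
    fun_prop
  have hmeas := hcont.aestronglyMeasurable (μ := volume)
  rw [← memLp_norm_rpow_iff hmeas hq0 hqtop, ENNReal.div_self hq0 hqtop,
    memLp_one_iff_integrable]
  have h : ∀ x : ℝ, ‖Complex.exp (-(b : ℂ) * (x : ℂ) ^ 2)‖ ^ q.toReal
      = Real.exp (-(b * q.toReal) * x ^ 2) := by
    intro x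
    rw [Complex.norm_exp]
    have hre : (-(b : ℂ) * (x : ℂ) ^ 2).re = -b * x ^ 2 := by
      simp [pow_two]
    rw [hre, ← Real.exp_mul]
    ring_nf
  simp_rw [h]
  exact integrable_exp_neg_mul_sq (by have := ENNReal.toReal_pos hq0 hqtop; positivity)

lemma gaussianC_integrable {b : ℝ} (hb : 0 < b) :
    Integrable (fun x : ℝ => Complex.exp (-(b : ℂ) * (x : ℂ) ^ 2)) volume := by
  simpa using integrable_cexp_quadratic (b := (b : ℂ)) (by simpa using hb) 0 0

lemma memLp_translate {f : ℝ → ℂ} {q : ℝ≥0∞} (hf : MemLp f q volume) (t : ℝ) :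
    MemLp (fun x => f (x - t)) q volume := by
  have h := measurePreserving_sub_right (volume : Measure ℝ) t
  have : MemLp f q (Measure.map (· - t) volume) := by rwa [h.map_eq]
  exact this.comp_of_map h.measurable.aemeasurable

lemma eLpNorm_translate {f : ℝ → ℂ} (hf : AEStronglyMeasurable f volume) (q : ℝ≥0∞) (t : ℝ) :
    eLpNorm (fun x => f (x - t)) q volume = eLpNorm f q volume :=
  eLpNorm_comp_measurePreserving hf (measurePreserving_sub_right volume t)

lemma integrable_translate {f : ℝ → ℂ} (hf : Integrable f volume) (t : ℝ) :
    Integrable (fun x => f (x - t)) volume :=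
  hf.comp_sub_right t

set_option maxHeartbeats 1000000 in
lemma translate_sep {P : ℝ≥0∞} (hP1 : 1 ≤ P) (hPtop : P ≠ ∞) {h : ℝ → ℂ}
    (hh : MemLp h P volume) (hν : eLpNorm h P volume ≠ 0) :
    ∃ R : ℝ, ∀ t : ℝ, R ≤ |t| →
      eLpNorm h P volume / 4 ≤ eLpNorm (fun x => h (x - t) - h x) P volume := by
  set ν := eLpNorm h P volume with hνdef
  have hν4 : ν / 4 ≠ 0 := by
    simp [ENNReal.div_eq_zero_iff, hν]
  obtain ⟨G, hGsupp, hGclose, hGcont, hGmem⟩ :=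
    hh.exists_hasCompactSupport_eLpNorm_sub_le hPtop hν4
  obtain ⟨M, hM⟩ := hGsupp.isBounded.subset_closedBall 0
  refine ⟨2 * |M| + 1, fun t ht => ?_⟩
  set A := eLpNorm (fun x => h (x - t) - h x) P volume with hAdef
  have hpt : ∀ x : ℝ, ‖G x‖ ≤ ‖G (x - t) - G x‖ := by
    intro x
    by_cases hx : x ∈ tsupport G
    · have hxM : |x| ≤ |M| := by
        have := hM hx
        rw [Metric.mem_closedBall, Real.dist_eq, sub_zero] at this
        exact this.trans (le_abs_self M)
      have hxt : x - t ∉ tsupport G := by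
        intro hmem
        have h2 := hM hmem
        rw [Metric.mem_closedBall, Real.dist_eq, sub_zero] at h2
        have h3 : |t| - |x| ≤ |x - t| := by
          have := abs_sub_abs_le_abs_sub t x
          have h4 : |t - x| = |x - t| := abs_sub_comm t x
          linarith
        have h5 : |x - t| ≤ |M| := h2.trans (le_abs_self M)
        linarith
      rw [image_eq_zero_of_notMem_tsupport hxt, zero_sub, norm_neg]
    · rw [image_eq_zero_of_notMem_tsupport hx]
      simp [norm_nonneg]
  have e1 : eLpNorm G P volume ≤ eLpNorm (fun x => G (x - t) - G x) P volume :=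
    eLpNorm_mono hpt
  have hGm := hGmem.aestronglyMeasurable
  have hhm := hh.aestronglyMeasurable
  have hhtm := (memLp_translate hh t).aestronglyMeasurable
  have hGtm := (memLp_translate hGmem t).aestronglyMeasurable
  have trans1 : ν ≤ eLpNorm (h - G) P volume + eLpNorm G P volume := by
    have : h = (h - G) + G := by
      funext x
      show h x = h x - G x + G x
      ring
    calc ν = eLpNorm ((h - G) + G) P volume := by rw [← this]
    _ ≤ _ := eLpNorm_add_le (hhm.sub hGm) hGm hP1
  have eq1 : eLpNorm (fun x => G (x - t) - h (x - t)) P volume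
      = eLpNorm (G - h) P volume := by
    have := eLpNorm_comp_measurePreserving (p := P) (g := G - h) (hGm.sub hhm)
      (measurePreserving_sub_right volume t)
    simpa [Function.comp_def] using this
  have trans2 : eLpNorm (fun x => G (x - t) - G x) P volume
      ≤ (eLpNorm (G - h) P volume + A) + eLpNorm (h - G) P volume := by
    have hfe : (fun x => G (x - t) - G x)
        = (fun x => (G (x - t) - h (x - t)) + (h (x - t) - h x)) + (fun x => h x - G x) := by
      funext x
      show _ = G (x - t) - h (x - t) + (h (x - t) - h x) + (h x - G x)
      ring
    rw [hfe, ← eq1]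
    calc eLpNorm _ P volume
        ≤ eLpNorm (fun x => (G (x - t) - h (x - t)) + (h (x - t) - h x)) P volume
          + eLpNorm (fun x => h x - G x) P volume := by
          exact eLpNorm_add_le ((hGtm.sub hhtm).add (hhtm.sub hhm)) (hhm.sub hGm) hP1
      _ ≤ (eLpNorm (fun x => G (x - t) - h (x - t)) P volume + A)
          + eLpNorm (fun x => h x - G x) P volume := by
          gcongr
          exact eLpNorm_add_le (hGtm.sub hhtm) (hhtm.sub hhm) hP1
      _ = (eLpNorm (fun x => G (x - t) - h (x - t)) P volume + A)
          + eLpNorm (h - G) P volume := rfl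
  have hGH : eLpNorm (G - h) P volume ≤ ν / 4 := by
    rw [eLpNorm_sub_comm]; exact hGclose
  have hHG : eLpNorm (h - G) P volume ≤ ν / 4 := hGclose
  by_contra hc
  push_neg at hc
  have key : ν ≤ A + 3 * (ν / 4) := by
    calc ν ≤ eLpNorm (h - G) P volume + eLpNorm G P volume := trans1
      _ ≤ ν / 4 + ((eLpNorm (G - h) P volume + A) + eLpNorm (h - G) P volume) := by
          gcongr
          exact e1.trans trans2
      _ ≤ ν / 4 + ((ν / 4 + A) + ν / 4) := by gcongr
      _ = A + 3 * (ν / 4) := by ring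
  have h4 : ν / 4 * 4 = ν := ENNReal.div_mul_cancel (by norm_num) (by norm_num)
  have : ν < ν := by
    calc ν ≤ A + 3 * (ν / 4) := key
      _ < ν / 4 + 3 * (ν / 4) := by
          have hfin : 3 * (ν / 4) ≠ ⊤ := by
            have hν' : ν ≠ ⊤ := hh.2.ne
            exact ENNReal.mul_ne_top (by norm_num) ((ENNReal.div_lt_top hν' (by norm_num)).ne)
          exact ENNReal.add_lt_add_right hfin hc
      _ = ν / 4 * 4 := by ring
      _ = ν := h4
  exact absurd this (lt_irrefl ν)

lemma no_compact {P : ℝ≥0∞} [Fact (1 ≤ P)]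
    (T : Lp ℂ P (volume : Measure ℝ) →L[ℂ] Lp ℂ P (volume : Measure ℝ))
    (hcmp : IsCompactOperator T) (u : ℕ → Lp ℂ P (volume : Measure ℝ)) {c : ℝ}
    (hu : ∀ n, ‖u n‖ ≤ c) {δ : ℝ} (hδ : 0 < δ)
    (hsep : ∀ m n : ℕ, m ≠ n → δ ≤ dist (T (u m)) (T (u n))) : False := by
  have hcmp' : IsCompactOperator
      (↑T : Lp ℂ P (volume : Measure ℝ) →ₗ[ℂ] Lp ℂ P (volume : Measure ℝ)) := by
    simpa using hcmp
  obtain ⟨K, hK, him⟩ := hcmp'.image_closedBall_subset_compact (𝕜₁ := ℂ) c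
  have hmem : ∀ n, T (u n) ∈ K := by
    intro n
    have : u n ∈ Metric.closedBall (0 : Lp ℂ P (volume : Measure ℝ)) c := by
      simpa [Metric.mem_closedBall, dist_zero_right] using hu n
    exact him ⟨u n, this, by simp⟩
  obtain ⟨L, -, φ, hφ, hconv⟩ := hK.isSeqCompact hmem
  obtain ⟨N, hN⟩ := Metric.tendsto_atTop.mp hconv (δ / 2) (by linarith)
  have h1 := hN N le_rfl
  have h2 := hN (N + 1) (by omega)
  have hne : φ N ≠ φ (N + 1) := fun hh => by
    have := hφ.injective hh
    omega
  have hs := hsep _ _ hne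
  have htri : dist (T (u (φ N))) (T (u (φ (N + 1))))
      ≤ dist ((fun n => T (u n)) (φ N)) L + dist ((fun n => T (u n)) (φ (N + 1))) L :=
    dist_triangle_right _ _ _
  simp only [Function.comp] at h1 h2
  have := hs.trans htri
  linarith

lemma Ftransform_translate (f : ℝ → ℂ) (t x : ℝ) :
    Ftransform (fun s => f (s - t)) x
      = Complex.exp (Complex.I * t * x) * Ftransform f x := by
  unfold Ftransform
  have step1 : (fun s : ℝ => f (s - t) * Complex.exp (Complex.I * s * x))
      = fun s : ℝ =>
        (fun u : ℝ => f u * Complex.exp (Complex.I * ((u : ℂ) + (t : ℂ)) * x)) (s - t) := by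
    funext s
    have hc : ((s - t : ℝ) : ℂ) + (t : ℂ) = (s : ℂ) := by push_cast; ring
    simp only [hc]
  rw [step1, integral_sub_right_eq_self (μ := (volume : Measure ℝ))
    (fun u : ℝ => f u * Complex.exp (Complex.I * ((u : ℂ) + (t : ℂ)) * x)) t]
  have step2 : ∀ u : ℝ, f u * Complex.exp (Complex.I * ((u : ℂ) + (t : ℂ)) * x)
      = Complex.exp (Complex.I * t * x) • (f u * Complex.exp (Complex.I * u * x)) := by
    intro u
    rw [show Complex.I * ((u : ℂ) + (t : ℂ)) * (x : ℂ)
        = Complex.I * (u : ℂ) * (x : ℂ) + Complex.I * (t : ℂ) * (x : ℂ) by ring,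
      Complex.exp_add, smul_eq_mul]
    ring
  simp_rw [step2]
  rw [integral_smul, smul_eq_mul]

lemma Finv_modulate (g : ℝ → ℂ) (t x : ℝ) :
    Finv (fun y => Complex.exp (Complex.I * t * y) * g y) x = Finv g (x - t) := by
  unfold Finv
  congr 1
  apply integral_congr_ae
  filter_upwards with y
  rw [mul_comm (Complex.exp _) (g y), mul_assoc, ← Complex.exp_add]
  congr 2
  push_cast
  ring

lemma Ftransform_gaussian_eq :
    Ftransform (fun x : ℝ => Complex.exp (-(1 : ℂ) * (x : ℂ) ^ 2))
      = fun x : ℝ => (Real.pi : ℂ) ^ (1 / 2 : ℂ) * Complex.exp (-(x : ℂ) ^ 2 / 4) := by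
  funext x
  unfold Ftransform
  rw [show (fun s : ℝ => Complex.exp (-(1 : ℂ) * (s : ℂ) ^ 2)
        * Complex.exp (Complex.I * s * x))
      = fun s : ℝ => Complex.exp (Complex.I * (x : ℂ) * s)
        * Complex.exp (-(1 : ℂ) * (s : ℂ) ^ 2) by
    funext s
    rw [mul_comm]
    congr 2
    ring]
  rw [fourierIntegral_gaussian (by norm_num) (x : ℂ)]
  norm_num

end AuxLemmas

/-- Let `1 < p < ∞` and `a ∈ L^∞(ℝ;ℂ)`. Suppose `T : L^p(ℝ;ℂ) → L^p(ℝ;ℂ)` is a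
bounded linear operator such that `T f = F⁻¹(a · F f)` for every `f ∈ L²(ℝ;ℂ) ∩ L^p(ℝ;ℂ)`
(i.e. `a` is a Fourier multiplier on `L^p(ℝ)` and `T = W⁰(a)`); here `FL2` and `FinvL2` are
the extensions of `F` and `F⁻¹` to `L²` by Plancherel, characterized by agreeing a.e. with
the integral formulas on `L¹ ∩ L²` and being mutually inverse. If `T` is compact, then
`a = 0` almost everywhere on `ℝ`. -/
theorem compact_fourier_convolution_on_Lp_implies_symbol_zero
    (p : ℝ) (hp : 1 < p) [Fact (1 ≤ ENNReal.ofReal p)]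
    (a : ℝ → ℂ) (ha : MemLp a ⊤ (volume : Measure ℝ))
    (FL2 FinvL2 : Lp ℂ 2 (volume : Measure ℝ) →L[ℂ] Lp ℂ 2 (volume : Measure ℝ))
    (hFL2 : ∀ (f : ℝ → ℂ) (hf1 : Integrable f volume) (hf2 : MemLp f 2 volume),
      (FL2 (hf2.toLp f) : ℝ → ℂ) =ᵐ[volume] Ftransform f)
    (hFinvL2 : ∀ (g : ℝ → ℂ) (hg1 : Integrable g volume) (hg2 : MemLp g 2 volume),
      (FinvL2 (hg2.toLp g) : ℝ → ℂ) =ᵐ[volume] Finv g)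
    (hinv₁ : ∀ u, FinvL2 (FL2 u) = u) (hinv₂ : ∀ u, FL2 (FinvL2 u) = u)
    (T : Lp ℂ (ENNReal.ofReal p) (volume : Measure ℝ) →L[ℂ]
      Lp ℂ (ENNReal.ofReal p) (volume : Measure ℝ))
    (hT : ∀ (f : ℝ → ℂ) (hf2 : MemLp f 2 volume) (hfp : MemLp f (ENNReal.ofReal p) volume)
      (hg : MemLp (fun x => a x * (FL2 (hf2.toLp f) : ℝ → ℂ) x) 2 volume),
      (T (hfp.toLp f) : ℝ → ℂ) =ᵐ[volume] (FinvL2 (hg.toLp _) : ℝ → ℂ)) :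
    IsCompactOperator T → a =ᵐ[volume] 0 := by
  intro hcmp
  have hP1 : (1 : ℝ≥0∞) ≤ ENNReal.ofReal p := Fact.out
  have hPtop : ENNReal.ofReal p ≠ ∞ := ENNReal.ofReal_ne_top
  have hP0 : ENNReal.ofReal p ≠ 0 := by
    simp only [ne_eq, ENNReal.ofReal_eq_zero, not_le]
    linarith
  -- the Gaussian and its Fourier transform
  have hf₀1 : Integrable (fun x : ℝ => Complex.exp (-(1 : ℂ) * (x : ℂ) ^ 2)) volume := by
    have := gaussianC_integrable (b := (1 : ℝ)) one_pos
    simpa using this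
  have hf₀mem : ∀ q : ℝ≥0∞, q ≠ 0 → q ≠ ∞ →
      MemLp (fun x : ℝ => Complex.exp (-(1 : ℂ) * (x : ℂ) ^ 2)) q volume := by
    intro q h0 htop
    have := gaussianC_memLp (b := (1 : ℝ)) one_pos q h0 htop
    simpa using this
  have hf₀2 : MemLp (fun x : ℝ => Complex.exp (-(1 : ℂ) * (x : ℂ) ^ 2)) 2 volume :=
    hf₀mem 2 (by norm_num) (by norm_num)
  have hf₀P : MemLp (fun x : ℝ => Complex.exp (-(1 : ℂ) * (x : ℂ) ^ 2))
      (ENNReal.ofReal p) volume := hf₀mem _ hP0 hPtop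
  set f₀ : ℝ → ℂ := fun x : ℝ => Complex.exp (-(1 : ℂ) * (x : ℂ) ^ 2) with hf₀def
  set F₀ : ℝ → ℂ :=
    fun x : ℝ => (Real.pi : ℂ) ^ (1 / 2 : ℂ) * Complex.exp (-(x : ℂ) ^ 2 / 4) with hF₀def
  have hFt : Ftransform f₀ = F₀ := Ftransform_gaussian_eq
  have hF₀ne : ∀ x : ℝ, F₀ x ≠ 0 := by
    intro x
    apply mul_ne_zero
    · rw [Complex.cpow_def_of_ne_zero (by
        simpa using Real.pi_ne_zero)]
      exact Complex.exp_ne_zero _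
    · exact Complex.exp_ne_zero _
  have hgauss4 : (fun x : ℝ => Complex.exp (-(x : ℂ) ^ 2 / 4))
      = fun x : ℝ => Complex.exp (-(((1 : ℝ) / 4 : ℝ) : ℂ) * (x : ℂ) ^ 2) := by
    funext x
    congr 1
    push_cast
    ring
  have hF₀1 : Integrable F₀ volume := by
    have hbase : Integrable (fun x : ℝ => Complex.exp (-(x : ℂ) ^ 2 / 4)) volume := by
      rw [hgauss4]
      exact gaussianC_integrable (by norm_num)
    exact hbase.const_mul _
  have hF₀2 : MemLp F₀ 2 volume := by
    have hbase : MemLp (fun x : ℝ => Complex.exp (-(x : ℂ) ^ 2 / 4)) 2 volume := by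
      rw [hgauss4]
      exact gaussianC_memLp (by norm_num) 2 (by norm_num) (by norm_num)
    exact hbase.const_mul _
  -- bound for a
  have habound : ∀ᵐ x ∂(volume : Measure ℝ), ‖a x‖ ≤ (eLpNorm a ⊤ volume).toReal := by
    filter_upwards [ae_le_eLpNormEssSup (f := a) (μ := (volume : Measure ℝ))] with x hx
    have hxx : (‖a x‖₊ : ℝ≥0∞) ≤ eLpNorm a ⊤ volume := by
      rwa [eLpNorm_exponent_top]
    calc ‖a x‖ = ((‖a x‖₊ : ℝ≥0∞)).toReal := by simp
    _ ≤ _ := ENNReal.toReal_mono ha.2.ne hxx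
  have hmulmem : ∀ g : ℝ → ℂ, MemLp g 2 volume → MemLp (fun x => a x * g x) 2 volume := by
    intro g hg
    exact hg.mul' (p := ⊤) (q := 2) (r := 2) ha
  -- g₀
  set g₀ : ℝ → ℂ := fun x => a x * F₀ x with hg₀def
  have hg₀1 : Integrable g₀ volume := hF₀1.bdd_mul ha.aestronglyMeasurable habound
  have hg₀2 : MemLp g₀ 2 volume := hmulmem F₀ hF₀2
  -- the key identity for translates
  have key : ∀ t : ℝ,
      (T ((memLp_translate hf₀P t).toLp (fun x => f₀ (x - t))) : ℝ → ℂ)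
        =ᵐ[volume] fun x => Finv g₀ (x - t) := by
    intro t
    have hft1 : Integrable (fun x => f₀ (x - t)) volume := integrable_translate hf₀1 t
    have hft2 : MemLp (fun x => f₀ (x - t)) 2 volume := memLp_translate hf₀2 t
    have hftP : MemLp (fun x => f₀ (x - t)) (ENNReal.ofReal p) volume := memLp_translate hf₀P t
    have hFL2t := hFL2 _ hft1 hft2
    have hgt_eq : (fun x : ℝ => a x * Ftransform (fun s => f₀ (s - t)) x)
        = fun x : ℝ => Complex.exp (Complex.I * t * x) * g₀ x := by
      funext x
      rw [Ftransform_translate, hFt, hg₀def]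
      ring
    have hexp1 : ∀ x : ℝ, ‖Complex.exp (Complex.I * t * x)‖ ≤ (1 : ℝ) := by
      intro x
      rw [Complex.norm_exp]
      simp
    have hgt1 : Integrable (fun x : ℝ => Complex.exp (Complex.I * t * x) * g₀ x) volume := by
      refine hg₀1.bdd_mul ?_ (Filter.Eventually.of_forall hexp1)
      exact (Complex.continuous_exp.comp (by fun_prop)).aestronglyMeasurable
    have hgt2 : MemLp (fun x : ℝ => Complex.exp (Complex.I * t * x) * g₀ x) 2 volume := by
      refine hg₀2.of_le ?_ (Filter.Eventually.of_forall fun x => ?_)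
      · exact ((Complex.continuous_exp.comp (by fun_prop)).aestronglyMeasurable).mul
          hg₀2.aestronglyMeasurable
      · rw [norm_mul, Complex.norm_exp]
        simp
    have hgmem : MemLp
        (fun x => a x * (FL2 (hft2.toLp (fun x => f₀ (x - t))) : ℝ → ℂ) x) 2 volume :=
      hmulmem _ (Lp.memLp _)
    have hTt := hT _ hft2 hftP hgmem
    have hcoe_a : (fun x => a x * (FL2 (hft2.toLp (fun x => f₀ (x - t))) : ℝ → ℂ) x)
        =ᵐ[volume] fun x : ℝ => Complex.exp (Complex.I * t * x) * g₀ x := by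
      filter_upwards [hFL2t] with x hx
      have := congrFun hgt_eq x
      rw [hx, this]
    have htoLp : hgmem.toLp _ = hgt2.toLp _ := MemLp.toLp_congr _ _ hcoe_a
    have hFinvt := hFinvL2 _ hgt1 hgt2
    have hfinal : Finv (fun x : ℝ => Complex.exp (Complex.I * t * x) * g₀ x)
        = fun x => Finv g₀ (x - t) := by
      funext x
      exact Finv_modulate g₀ t x
    refine hTt.trans ?_
    rw [htoLp]
    refine hFinvt.trans ?_
    rw [hfinal]
  -- membership of h := Finv g₀
  have hmemh' : MemLp (fun x => Finv g₀ (x - (0 : ℝ))) (ENNReal.ofReal p) volume :=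
    MemLp.ae_eq (key 0) (Lp.memLp _)
  have hmemh : MemLp (Finv g₀) (ENNReal.ofReal p) volume := by
    simpa [sub_zero] using hmemh'
  by_cases hν : eLpNorm (Finv g₀) (ENNReal.ofReal p) volume = 0
  · -- then g₀ = 0 a.e., hence a = 0 a.e.
    have hFg0 : Finv g₀ =ᵐ[volume] 0 :=
      (eLpNorm_eq_zero_iff hmemh.aestronglyMeasurable hP0).mp hν
    have hFinv0 := hFinvL2 g₀ hg₀1 hg₀2
    have hzero : FinvL2 (hg₀2.toLp g₀) = 0 := by
      rw [Lp.eq_zero_iff_ae_eq_zero]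
      exact hFinv0.trans hFg0
    have htoLp0 : hg₀2.toLp g₀ = 0 := by
      have h2 := hinv₂ (hg₀2.toLp g₀)
      rw [hzero, map_zero] at h2
      exact h2.symm
    have hg₀0 : g₀ =ᵐ[volume] 0 := by
      calc g₀ =ᵐ[volume] ⇑(hg₀2.toLp g₀) := (hg₀2.coeFn_toLp).symm
      _ =ᵐ[volume] ⇑(0 : Lp ℂ 2 (volume : Measure ℝ)) := by rw [htoLp0]
      _ =ᵐ[volume] 0 := Lp.coeFn_zero _ _ _
    filter_upwards [hg₀0] with x hx
    have hx' : a x * F₀ x = 0 := hx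
    rcases mul_eq_zero.mp hx' with h | h
    · simpa using h
    · exact absurd h (hF₀ne x)
  · -- compactness contradiction
    exfalso
    have hνtop : eLpNorm (Finv g₀) (ENNReal.ofReal p) volume ≠ ⊤ := hmemh.2.ne
    obtain ⟨R, hR⟩ := translate_sep hP1 hPtop hmemh hν
    set tt : ℕ → ℝ := fun n => (n : ℝ) * (|R| + 1) with httdef
    have hδpos : 0 < ((eLpNorm (Finv g₀) (ENNReal.ofReal p) volume) / 4).toReal := by
      refine ENNReal.toReal_pos ?_ ?_
      · simp [ENNReal.div_eq_zero_iff, hν]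
      · exact (ENNReal.div_lt_top hνtop (by norm_num)).ne
    refine no_compact T hcmp
      (fun n => (memLp_translate hf₀P (tt n)).toLp (fun x => f₀ (x - tt n)))
      (c := (eLpNorm f₀ (ENNReal.ofReal p) volume).toReal)
      (fun n => ?_) hδpos (fun m n hmn => ?_)
    · -- norm bound
      show ‖(memLp_translate hf₀P (tt n)).toLp (fun x => f₀ (x - tt n))‖ ≤ _
      rw [Lp.norm_toLp, eLpNorm_translate hf₀P.aestronglyMeasurable]
    · -- separation
      have hsepE : eLpNorm (Finv g₀) (ENNReal.ofReal p) volume / 4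
          ≤ eLpNorm (fun x => Finv g₀ (x - tt m) - Finv g₀ (x - tt n))
              (ENNReal.ofReal p) volume := by
        have hcmp2 : (fun x : ℝ => Finv g₀ (x - tt m) - Finv g₀ (x - tt n))
            = (fun x => Finv g₀ (x - (tt m - tt n)) - Finv g₀ x) ∘ (fun x => x - tt n) := by
          funext x
          simp only [Function.comp_apply]
          have harg : x - tt n - (tt m - tt n) = x - tt m := by ring
          rw [harg]
        have hAESM : AEStronglyMeasurable
            (fun x => Finv g₀ (x - (tt m - tt n)) - Finv g₀ x) volume :=
          ((memLp_translate hmemh (tt m - tt n)).sub hmemh).aestronglyMeasurable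
        have hcomp := eLpNorm_comp_measurePreserving (p := ENNReal.ofReal p)
          (g := fun x => Finv g₀ (x - (tt m - tt n)) - Finv g₀ x) hAESM
          (measurePreserving_sub_right volume (tt n))
        rw [hcmp2, hcomp]
        apply hR
        have h1 : (1 : ℝ) ≤ |(m : ℝ) - (n : ℝ)| := by
          have hne : (m : ℤ) - (n : ℤ) ≠ 0 := by
            simp only [ne_eq, sub_eq_zero]
            exact_mod_cast hmn
          have := Int.one_le_abs hne
          calc (1 : ℝ) ≤ (|(m : ℤ) - (n : ℤ)| : ℤ) := by exact_mod_cast this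
          _ = |(m : ℝ) - (n : ℝ)| := by push_cast; rfl
        have habs : |tt m - tt n| = |(m : ℝ) - (n : ℝ)| * (|R| + 1) := by
          rw [httdef]
          simp only
          rw [← sub_mul, abs_mul, abs_of_nonneg (by positivity : (0:ℝ) ≤ |R| + 1)]
        rw [habs]
        nlinarith [le_abs_self R, abs_nonneg R]
      -- convert to dist
      rw [dist_eq_norm, Lp.norm_def]
      have hae : (⇑(T ((memLp_translate hf₀P (tt m)).toLp (fun x => f₀ (x - tt m)))
            - T ((memLp_translate hf₀P (tt n)).toLp (fun x => f₀ (x - tt n)))) : ℝ → ℂ)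
          =ᵐ[volume] fun x => Finv g₀ (x - tt m) - Finv g₀ (x - tt n) := by
        filter_upwards [Lp.coeFn_sub
          (T ((memLp_translate hf₀P (tt m)).toLp (fun x => f₀ (x - tt m))))
          (T ((memLp_translate hf₀P (tt n)).toLp (fun x => f₀ (x - tt n)))),
          key (tt m), key (tt n)] with x h1 h2 h3
        rw [h1, Pi.sub_apply, h2, h3]
      rw [eLpNorm_congr_ae hae]
      refine ENNReal.toReal_mono ?_ hsepE
      rw [← eLpNorm_congr_ae hae]
      exact (Lp.memLp _).2.ne
end

section
/- Let 1 < p < ∞ with conjugate exponent p' = p/(p−1), and let w : ℝ → (0,∞) be a measurable weight with w ∈ L^p_loc(ℝ) and w⁻¹ ∈ L^{p'}_loc(ℝ). Let μ = w^p · (Lebesgue measure) and suppose the uncentered Hardy–Littlewood maximal operator M, defined by (Mf)(x) = sup { (1/(b−a)) ∫_a^b |f(y)| dy : a < b, a ≤ x ≤ b }, is bounded on L^p(μ), i.e. there is C > 0 with ‖Mf‖_{L^p(μ)} ≤ C‖f‖_{L^p(μ)} for all f ∈ L^p(μ). Let t ∈ ℝ, let {δ_n}_{n∈ℕ} be positive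 real numbers with δ_n → 0, and let f : ℝ → ℂ be infinitely differentiable with compact support. For each n define g_n(x) := (1/(2π)) ∫_{t−δ_n}^{t+δ_n} e^{−ixτ} (Ff)(τ) dτ, i.e. g_n = F⁻¹(χ_{[t−δ_n,t+δ_n]} · Ff). Then ‖g_n‖_{L^p(μ)} → 0 as n → ∞. -/
open MeasureTheory Filter Set
open Topology

/-- The measure `μ = w^p · (Lebesgue measure)`, so that `L^p(μ)` is the weighted Lebesgue
space `L^p(ℝ, w)`. -/
noncomputable def wMeasure (w : ℝ → ℝ) (p : ℝ) : Measure ℝ :=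
  (volume : Measure ℝ).withDensity fun x => ENNReal.ofReal (w x ^ p)

/-- The uncentered Hardy–Littlewood maximal function
`(Mf)(x) = sup { (1/(b−a)) ∫_a^b |f(y)| dy : a < b, a ≤ x ≤ b }` (with values in `ℝ≥0∞`). -/
noncomputable def uncenteredMaximal (f : ℝ → ℂ) (x : ℝ) : ENNReal :=
  ⨆ (a : ℝ) (b : ℝ) (_ : a < b ∧ a ≤ x ∧ x ≤ b),
    (∫⁻ y in Set.Icc a b, (‖f y‖₊ : ENNReal) ∂(volume : Measure ℝ)) / ENNReal.ofReal (b - a)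

lemma Ftransform_eq_fourier (f : ℝ → ℂ) (x : ℝ) :
    Ftransform f x = FourierTransform.fourier f (-(x / (2 * Real.pi))) := by
  rw [Real.fourier_real_eq_integral_exp_smul]
  unfold Ftransform
  congr 1; funext v
  rw [smul_eq_mul, mul_comm]
  congr 2
  have h : (-2 * Real.pi * v * (-(x / (2 * Real.pi))) : ℝ) = v * x := by
    field_simp
  rw [h]; push_cast; ring

lemma hasDerivAt_Ftransform (f : ℝ → ℂ) (hf : Integrable f)
    (hf' : Integrable fun s : ℝ => s • f s) (x : ℝ) :
    HasDerivAt (Ftransform f)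
      ((-(2 * Real.pi)⁻¹ : ℝ) •
        FourierTransform.fourier (fun s : ℝ => (-2 * Real.pi * Complex.I * s) • f s)
          (-(x / (2 * Real.pi)))) x := by
  have h1 := Real.hasDerivAt_fourier hf hf' (-(x / (2 * Real.pi)))
  have h2 : HasDerivAt (fun y : ℝ => -(y / (2 * Real.pi))) (-(2 * Real.pi)⁻¹) x := by
    simpa using ((hasDerivAt_id x).div_const (2 * Real.pi)).fun_neg
  have h3 := h1.scomp x h2
  exact h3.congr_of_eventuallyEq (Eventually.of_forall fun y => Ftransform_eq_fourier f y)

lemma norm_Ftransform_le (f : ℝ → ℂ) (x : ℝ) : ‖Ftransform f x‖ ≤ ∫ s : ℝ, ‖f s‖ := by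
  rw [Ftransform_eq_fourier]
  exact VectorFourier.norm_fourierIntegral_le_integral_norm Real.fourierChar volume (innerₗ ℝ) f _


lemma norm_Ftransform_deriv_aux (f : ℝ → ℂ) (hfc : Continuous f) (hsupp : HasCompactSupport f) :
    ∀ x : ℝ, ‖((-(2 * Real.pi)⁻¹ : ℝ) •
        FourierTransform.fourier (fun s : ℝ => (-2 * Real.pi * Complex.I * s) • f s)
          (-(x / (2 * Real.pi))))‖ ≤ ∫ s : ℝ, |s| * ‖f s‖ := by
  intro x
  set gd : ℝ → ℂ := fun s => (-2 * Real.pi * Complex.I * s) • f s with hgd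
  have hn : ∀ s : ℝ, ‖gd s‖ = 2 * Real.pi * (|s| * ‖f s‖) := by
    intro s
    rw [hgd]
    simp only [smul_eq_mul, norm_mul, norm_neg,
      Complex.norm_I, Complex.norm_real, Real.norm_eq_abs, Complex.norm_two]
    rw [abs_of_pos Real.pi_pos]
    ring
  have hle := VectorFourier.norm_fourierIntegral_le_integral_norm
    (Real.fourierChar) (volume : Measure ℝ) (innerₗ ℝ) gd (-(x / (2 * Real.pi)))
  rw [norm_smul]
  have h2 : ∫ s : ℝ, ‖gd s‖ = 2 * Real.pi * ∫ s : ℝ, |s| * ‖f s‖ := by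
    simp_rw [hn]
    exact integral_const_mul _ _
  have h3 : ‖(-(2 * Real.pi)⁻¹ : ℝ)‖ = (2 * Real.pi)⁻¹ := by
    rw [norm_neg, Real.norm_eq_abs, abs_inv, abs_of_pos (by positivity : (0:ℝ) < 2 * Real.pi)]
  rw [h3]
  calc (2 * Real.pi)⁻¹ * ‖FourierTransform.fourier gd (-(x / (2 * Real.pi)))‖
      ≤ (2 * Real.pi)⁻¹ * (2 * Real.pi * ∫ s : ℝ, |s| * ‖f s‖) := by
        rw [← h2]; exact mul_le_mul_of_nonneg_left hle (by positivity)
    _ = ∫ s : ℝ, |s| * ‖f s‖ := by field_simp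

lemma norm_truncated_integral_le (f : ℝ → ℂ) (hfc : Continuous f) (hsupp : HasCompactSupport f)
    (a b : ℝ) (hab : a ≤ b) (x : ℝ) (hx : x ≠ 0) :
    ‖∫ τ in a..b, Complex.exp (-(Complex.I * x * τ)) * Ftransform f τ‖ ≤
      (2 * (∫ s : ℝ, ‖f s‖) + (b - a) * ∫ s : ℝ, |s| * ‖f s‖) / |x| := by
  have hfi : Integrable f := hfc.integrable_of_hasCompactSupport hsupp
  have hfi' : Integrable (fun s : ℝ => s • f s) :=
    (continuous_id.smul hfc).integrable_of_hasCompactSupport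
      (hsupp.mono (fun s hs => by
        simp only [Function.mem_support, ne_eq] at hs ⊢
        intro h; exact hs (by simp [h])))
  set S : ℝ := ∫ s : ℝ, ‖f s‖ with hS
  set S' : ℝ := ∫ s : ℝ, |s| * ‖f s‖ with hS'
  have hS0 : 0 ≤ S := integral_nonneg fun s => norm_nonneg _
  have hS'0 : 0 ≤ S' := integral_nonneg fun s => mul_nonneg (abs_nonneg _) (norm_nonneg _)
  set D : ℝ → ℂ := fun τ => (-(2 * Real.pi)⁻¹ : ℝ) •
    FourierTransform.fourier (fun s : ℝ => (-2 * Real.pi * Complex.I * s) • f s)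
      (-(τ / (2 * Real.pi))) with hD
  have hu : ∀ τ : ℝ, HasDerivAt (Ftransform f) (D τ) τ := fun τ =>
    hasDerivAt_Ftransform f hfi hfi' τ
  have hD_bound : ∀ τ : ℝ, ‖D τ‖ ≤ S' := norm_Ftransform_deriv_aux f hfc hsupp
  have hgd_cont : Continuous fun s : ℝ => (-2 * Real.pi * Complex.I * s) • f s := by fun_prop
  have hgd_supp : HasCompactSupport fun s : ℝ => (-2 * Real.pi * Complex.I * s) • f s :=
    hsupp.mono (fun s hs => by
      simp only [Function.mem_support, ne_eq] at hs ⊢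
      intro h; exact hs (by simp [h]))
  have hgdi : Integrable (fun s : ℝ => (-2 * Real.pi * Complex.I * s) • f s) volume :=
    hgd_cont.integrable_of_hasCompactSupport hgd_supp
  have hgdi' : Integrable fun s : ℝ => s • (-2 * Real.pi * Complex.I * s) • f s :=
    (continuous_id.smul hgd_cont).integrable_of_hasCompactSupport
      (hgd_supp.mono (fun s hs => by
        simp only [Function.mem_support, ne_eq] at hs ⊢
        intro h; exact hs (by show s • ((-2 * Real.pi * Complex.I * s) • f s) = 0; rw [h, smul_zero])))
  have hD_cont : Continuous D := by
    apply Continuous.fun_const_smul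
    exact (continuous_iff_continuousAt.2 fun w =>
      (Real.hasDerivAt_fourier hgdi hgdi' w).continuousAt).comp (by fun_prop)
  set c : ℂ := -(Complex.I * x) with hc
  have hc0 : c ≠ 0 := by
    simp [hc, Complex.I_ne_zero, Complex.ofReal_eq_zero, hx]
  have harg : ∀ τ : ℝ, -(Complex.I * (x : ℂ) * (τ : ℂ)) = c * τ := fun τ => by rw [hc]; ring
  set v : ℝ → ℂ := fun τ => Complex.exp (c * τ) / c with hv
  have hvd : ∀ τ : ℝ, HasDerivAt v (Complex.exp (c * τ)) τ := by
    intro τ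
    have hz : HasDerivAt (fun z : ℂ => c * z) c (τ : ℂ) := by
      simpa using (hasDerivAt_id (τ : ℂ)).const_mul c
    have he := (Complex.hasDerivAt_exp (c * τ)).comp (τ : ℂ) hz
    have h := (he.div_const c).comp_ofReal
    convert h using 1
    exacts [rfl, (mul_div_cancel_right₀ _ hc0).symm]
  have hexp1 : ∀ τ : ℝ, ‖Complex.exp (c * τ)‖ = 1 := by
    intro τ
    have h : (c * τ : ℂ) = ((-(x * τ) : ℝ) : ℂ) * Complex.I := by rw [hc]; push_cast; ring
    rw [h, Complex.norm_exp_ofReal_mul_I]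
  have hcnorm : ‖c‖ = |x| := by
    rw [hc, norm_neg, norm_mul, Complex.norm_I,
      Complex.norm_real, Real.norm_eq_abs, one_mul]
  have hxpos : (0:ℝ) < |x| := abs_pos.2 hx
  have hvnorm : ∀ τ : ℝ, ‖v τ‖ = 1 / |x| := by
    intro τ
    rw [hv]
    simp only [norm_div, hexp1, hcnorm]
  have hFf_bound : ∀ τ : ℝ, ‖Ftransform f τ‖ ≤ S := fun τ => norm_Ftransform_le f τ
  have hparts := intervalIntegral.integral_mul_deriv_eq_deriv_mul
    (u := Ftransform f) (u' := D) (v := v) (v' := fun τ : ℝ => Complex.exp (c * τ))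
    (fun τ _ => hu τ) (fun τ _ => hvd τ)
    (hD_cont.intervalIntegrable a b)
    ((Complex.continuous_exp.comp (by fun_prop)).intervalIntegrable a b)
  have hgoal : (fun τ : ℝ => Complex.exp (-(Complex.I * x * τ)) * Ftransform f τ) =
      fun τ : ℝ => Ftransform f τ * Complex.exp (c * τ) := funext fun τ => by
    rw [harg, mul_comm]
  rw [hgoal, hparts]
  have h1 : ‖Ftransform f b * v b‖ ≤ S / |x| := by
    rw [norm_mul, hvnorm]
    rw [div_eq_mul_one_div S]
    exact mul_le_mul_of_nonneg_right (hFf_bound b) (by positivity)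
  have h2 : ‖Ftransform f a * v a‖ ≤ S / |x| := by
    rw [norm_mul, hvnorm]
    rw [div_eq_mul_one_div S]
    exact mul_le_mul_of_nonneg_right (hFf_bound a) (by positivity)
  have h3 : ‖∫ τ in a..b, D τ * v τ‖ ≤ S' / |x| * (b - a) := by
    have := intervalIntegral.norm_integral_le_of_norm_le_const
      (C := S' / |x|) (f := fun τ => D τ * v τ) (a := a) (b := b) ?_
    · rwa [abs_of_nonneg (sub_nonneg.2 hab)] at this
    · intro τ _
      rw [norm_mul, hvnorm]
      rw [div_eq_mul_one_div S']
      exact mul_le_mul_of_nonneg_right (hD_bound τ) (by positivity)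
  calc ‖Ftransform f b * v b - Ftransform f a * v a - ∫ τ in a..b, D τ * v τ‖
      ≤ ‖Ftransform f b * v b - Ftransform f a * v a‖ + ‖∫ τ in a..b, D τ * v τ‖ :=
        norm_sub_le _ _
    _ ≤ (‖Ftransform f b * v b‖ + ‖Ftransform f a * v a‖) + ‖∫ τ in a..b, D τ * v τ‖ :=
        add_le_add (norm_sub_le _ _) le_rfl
    _ ≤ (S / |x| + S / |x|) + S' / |x| * (b - a) := by
        exact add_le_add (add_le_add h1 h2) h3
    _ = (2 * S + (b - a) * S') / |x| := by field_simp; ring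

lemma norm_truncated_integral_le' (f : ℝ → ℂ) (a b : ℝ) (hab : a ≤ b) (x : ℝ) :
    ‖∫ τ in a..b, Complex.exp (-(Complex.I * x * τ)) * Ftransform f τ‖ ≤
      (∫ s : ℝ, ‖f s‖) * (b - a) := by
  have h := intervalIntegral.norm_integral_le_of_norm_le_const
    (C := ∫ s : ℝ, ‖f s‖) (f := fun τ : ℝ => Complex.exp (-(Complex.I * x * τ)) * Ftransform f τ)
    (a := a) (b := b) ?_
  · rwa [abs_of_nonneg (sub_nonneg.2 hab)] at h
  · intro τ _
    rw [norm_mul]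
    have h1 : ‖Complex.exp (-(Complex.I * x * τ))‖ = 1 := by
      have h : (-(Complex.I * x * τ) : ℂ) = ((-(x * τ) : ℝ) : ℂ) * Complex.I := by
        push_cast; ring
      rw [h, Complex.norm_exp_ofReal_mul_I]
    rw [h1, one_mul]
    exact norm_Ftransform_le f τ

lemma continuous_truncated_integral (f : ℝ → ℂ) (hfc : Continuous f)
    (hsupp : HasCompactSupport f) (a b : ℝ) (hab : a ≤ b) :
    Continuous fun x : ℝ => ∫ τ in a..b, Complex.exp (-(Complex.I * x * τ)) * Ftransform f τ := by
  have hfi : Integrable f := hfc.integrable_of_hasCompactSupport hsupp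
  have hfi' : Integrable (fun s : ℝ => s • f s) :=
    (continuous_id.smul hfc).integrable_of_hasCompactSupport
      (hsupp.mono (fun s hs => by
        simp only [Function.mem_support, ne_eq] at hs ⊢
        intro h; exact hs (by simp [h])))
  have hFf_cont : Continuous (Ftransform f) := continuous_iff_continuousAt.2 fun τ =>
    (hasDerivAt_Ftransform f hfi hfi' τ).continuousAt
  have heq : (fun x : ℝ => ∫ τ in a..b, Complex.exp (-(Complex.I * x * τ)) * Ftransform f τ) =
      fun x : ℝ => ∫ τ in Ioc a b, Complex.exp (-(Complex.I * x * τ)) * Ftransform f τ :=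
    funext fun x => intervalIntegral.integral_of_le hab
  rw [heq]
  apply continuous_of_dominated
    (bound := fun τ : ℝ => ∫ s : ℝ, ‖f s‖)
  · exact fun x => ((Complex.continuous_exp.comp (by fun_prop)).mul hFf_cont).aestronglyMeasurable
  · intro x
    refine Eventually.of_forall fun τ => ?_
    rw [norm_mul]
    have h1 : ‖Complex.exp (-(Complex.I * x * τ))‖ = 1 := by
      have h : (-(Complex.I * x * τ) : ℂ) = ((-(x * τ) : ℝ) : ℂ) * Complex.I := by
        push_cast; ring
      rw [h, Complex.norm_exp_ofReal_mul_I]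
    rw [h1, one_mul]
    exact norm_Ftransform_le f τ
  · exact integrableOn_const measure_Ioc_lt_top.ne
  · exact Eventually.of_forall fun τ =>
      (Complex.continuous_exp.comp (by fun_prop)).mul continuous_const

lemma maximal_indicator_lower (x : ℝ) :
    (ENNReal.ofReal (1 + |x|))⁻¹ ≤
      uncenteredMaximal ((Icc (0:ℝ) 1).indicator fun _ => (1:ℂ)) x := by
  set a : ℝ := min x 0 with ha
  set b : ℝ := max x 1 with hb
  have hab : a < b ∧ a ≤ x ∧ x ≤ b :=
    ⟨lt_of_le_of_lt (min_le_right _ _) (lt_of_lt_of_le one_pos (le_max_right _ _)),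
      min_le_left _ _, le_max_left _ _⟩
  have hsub : Icc (0:ℝ) 1 ⊆ Icc a b := Icc_subset_Icc (min_le_right _ _) (le_max_right _ _)
  have hint : (∫⁻ y in Icc a b,
      (‖((Icc (0:ℝ) 1).indicator fun _ => (1:ℂ)) y‖₊ : ENNReal) ∂volume) = 1 := by
    have hfn : (fun y => (‖((Icc (0:ℝ) 1).indicator fun _ => (1:ℂ)) y‖₊ : ENNReal)) =
        (Icc (0:ℝ) 1).indicator fun _ => (1 : ENNReal) := by
      funext y
      by_cases hy : y ∈ Icc (0:ℝ) 1 <;>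
        simp [Set.indicator_of_mem, Set.indicator_of_notMem, hy]
    rw [hfn, lintegral_indicator measurableSet_Icc, lintegral_one,
      Measure.restrict_restrict measurableSet_Icc, Measure.restrict_apply_univ,
      Set.inter_eq_left.2 hsub, Real.volume_Icc]
    norm_num
  have hba : b - a ≤ 1 + |x| := by
    rcases le_total x 0 with hx | hx
    · have h1 : a = x := min_eq_left hx
      have h2 : b = 1 := max_eq_right (le_trans hx zero_le_one)
      rw [h1, h2, abs_of_nonpos hx]; linarith
    · have h1 : a = 0 := min_eq_right hx
      have h2 : b ≤ 1 + x := max_le (by linarith) (by linarith)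
      rw [h1, abs_of_nonneg hx]; linarith
  refine le_trans ?_ (le_iSup_of_le a (le_iSup_of_le b (le_iSup_of_le hab le_rfl)))
  rw [hint, one_div]
  exact ENNReal.inv_le_inv' (ENNReal.ofReal_le_ofReal hba)

/-- Let `1 < p < ∞` with conjugate exponent `p' = p/(p−1)`, and let
`w : ℝ → (0,∞)` be a measurable weight with `w ∈ L^p_loc(ℝ)` and `w⁻¹ ∈ L^{p'}_loc(ℝ)`. Let
`μ = w^p·dx` and suppose the uncentered Hardy–Littlewood maximal operator `M` is bounded on
`L^p(μ)`, i.e. there is `C > 0` with `‖Mf‖_{L^p(μ)} ≤ C‖f‖_{L^p(μ)}` for all `f ∈ L^p(μ)`.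
Let `t ∈ ℝ`, `{δ_n}` positive reals with `δ_n → 0`, and let `f : ℝ → ℂ` be infinitely
differentiable with compact support. For each `n` let
`g_n(x) := (1/(2π)) ∫_{t−δ_n}^{t+δ_n} e^{−ixτ} (Ff)(τ) dτ`, i.e.
`g_n = F⁻¹(χ_{[t−δ_n,t+δ_n]} · Ff)`. Then `‖g_n‖_{L^p(μ)} → 0` as `n → ∞`. -/
theorem weighted_Lp_norm_of_truncated_inverse_fourier_tendsto_zero
    (p : ℝ) (hp : 1 < p)
    (w : ℝ → ℝ) (hw_pos : ∀ x, 0 < w x) (hw_meas : Measurable w)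
    (hw_loc : LocallyIntegrable (fun x => w x ^ p) volume)
    (hw_loc' : LocallyIntegrable (fun x => (w x)⁻¹ ^ (p / (p - 1))) volume)
    (hM : ∃ C : ℝ, 0 < C ∧ ∀ f : ℝ → ℂ, MemLp f (ENNReal.ofReal p) (wMeasure w p) →
      (∫⁻ x, uncenteredMaximal f x ^ p ∂(wMeasure w p)) ^ (1 / p) ≤
        ENNReal.ofReal C * eLpNorm f (ENNReal.ofReal p) (wMeasure w p))
    (t : ℝ) (δ : ℕ → ℝ) (hδ_pos : ∀ n, 0 < δ n) (hδ : Tendsto δ atTop (nhds 0))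
    (f : ℝ → ℂ) (hf : ContDiff ℝ (⊤ : ℕ∞) f) (hsupp : HasCompactSupport f) :
    Tendsto (fun n => eLpNorm (fun x : ℝ =>
        (2 * Real.pi)⁻¹ • ∫ τ in (t - δ n)..(t + δ n),
          Complex.exp (-(Complex.I * x * τ)) * Ftransform f τ)
      (ENNReal.ofReal p) (wMeasure w p)) atTop (nhds 0) := by
  obtain ⟨C, hC_pos, hCM⟩ := hM
  set μ := wMeasure w p with hμdef
  have hπ : (0:ℝ) < 2 * Real.pi := by positivity
  have hp0 : (0:ℝ) < p := by linarith
  have hpne : (ENNReal.ofReal p) ≠ 0 := by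
    simp only [ne_eq, ENNReal.ofReal_eq_zero, not_le]; linarith
  have hptop : (ENNReal.ofReal p) ≠ ⊤ := ENNReal.ofReal_ne_top
  have htoReal : (ENNReal.ofReal p).toReal = p := ENNReal.toReal_ofReal hp0.le
  have hfc : Continuous f := hf.continuous
  set S : ℝ := ∫ s : ℝ, ‖f s‖ with hSdef
  set S' : ℝ := ∫ s : ℝ, |s| * ‖f s‖ with hS'def
  have hS0 : 0 ≤ S := integral_nonneg fun s => norm_nonneg _
  have hS'0 : 0 ≤ S' := integral_nonneg fun s => mul_nonneg (abs_nonneg _) (norm_nonneg _)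
  obtain ⟨D₀, hD₀⟩ := hδ.bddAbove_range
  have hδle : ∀ n, δ n ≤ D₀ := fun n => hD₀ (Set.mem_range_self n)
  have hD₀0 : 0 ≤ D₀ := le_trans (hδ_pos 0).le (hδle 0)
  set g : ℕ → ℝ → ℂ := fun n x => (2 * Real.pi)⁻¹ • ∫ τ in (t - δ n)..(t + δ n),
      Complex.exp (-(Complex.I * x * τ)) * Ftransform f τ with hgdef
  have hab : ∀ n, t - δ n ≤ t + δ n := fun n => by have := hδ_pos n; linarith
  set K₀ : ℝ := 2 * max (2 * S + 2 * D₀ * S') (2 * D₀ * S) with hK₀def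
  have hmax0 : 0 ≤ max (2 * S + 2 * D₀ * S') (2 * D₀ * S) :=
    le_trans (by positivity) (le_max_left _ _)
  have hK₀0 : 0 ≤ K₀ := by rw [hK₀def]; linarith
  set K : ℝ := (2 * Real.pi)⁻¹ * K₀ with hKdef
  have hK0 : 0 ≤ K := by positivity
  have hsm : ∀ n x, ‖g n x‖ = (2 * Real.pi)⁻¹ *
      ‖∫ τ in (t - δ n)..(t + δ n), Complex.exp (-(Complex.I * x * τ)) * Ftransform f τ‖ := by
    intro n x
    simp only [hgdef]
    rw [norm_smul, Real.norm_eq_abs, abs_of_pos (by positivity : (0:ℝ) < (2 * Real.pi)⁻¹)]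
  have hKb : ∀ n x, ‖g n x‖ ≤ K / (1 + |x|) := by
    intro n x
    have hxpos : (0:ℝ) < 1 + |x| := by positivity
    have hKdiv : K / (1 + |x|) = (2 * Real.pi)⁻¹ * (K₀ / (1 + |x|)) := by
      rw [hKdef, mul_div_assoc]
    rw [hsm n x, hKdiv]
    refine mul_le_mul_of_nonneg_left ?_ (by positivity)
    rcases le_or_gt 1 |x| with hx1 | hx1
    · have hx0 : x ≠ 0 := by
        intro h; rw [h, abs_zero] at hx1; linarith
      have h2 := norm_truncated_integral_le f hfc hsupp _ _ (hab n) x hx0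
      rw [← hSdef, ← hS'def] at h2
      refine le_trans h2 ?_
      rw [div_le_div_iff₀ (abs_pos.2 hx0) hxpos]
      have hmax : 2 * S + (t + δ n - (t - δ n)) * S' ≤ max (2 * S + 2 * D₀ * S') (2 * D₀ * S) := by
        refine le_trans ?_ (le_max_left _ _)
        have := hδle n
        nlinarith
      have h1x : 1 + |x| ≤ 2 * |x| := by linarith
      have := mul_le_mul hmax h1x (by positivity) hmax0
      rw [hK₀def]
      nlinarith [abs_nonneg x]
    · have h2 := norm_truncated_integral_le' f _ _ (hab n) x
      rw [← hSdef] at h2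
      refine le_trans h2 ?_
      rw [le_div_iff₀ hxpos]
      have hδn := hδle n
      have hmr := le_max_right (2 * S + 2 * D₀ * S') (2 * D₀ * S)
      rw [hK₀def]
      nlinarith [abs_nonneg x, mul_nonneg hS0 (hδ_pos n).le]
  set φ : ℝ → ℂ := (Icc (0:ℝ) 1).indicator fun _ => (1:ℂ) with hφdef
  have hφmem : MemLp φ (ENNReal.ofReal p) μ := by
    constructor
    · exact (stronglyMeasurable_const.indicator measurableSet_Icc).aestronglyMeasurable
    · rw [hφdef, eLpNorm_indicator_const measurableSet_Icc hpne hptop]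
      have hμI : μ (Icc (0:ℝ) 1) < ⊤ := by
        rw [hμdef, wMeasure, withDensity_apply _ measurableSet_Icc]
        exact (hw_loc.integrableOn_isCompact isCompact_Icc).lintegral_lt_top
      refine ENNReal.mul_lt_top (by simp) (ENNReal.rpow_lt_top_of_nonneg ?_ hμI.ne)
      rw [htoReal]; positivity
  have hMfin : (∫⁻ x, uncenteredMaximal φ x ^ p ∂μ) < ⊤ := by
    have h := hCM φ hφmem
    have h2 : (∫⁻ x, uncenteredMaximal φ x ^ p ∂μ) =
        ((∫⁻ x, uncenteredMaximal φ x ^ p ∂μ) ^ (1/p)) ^ p := by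
      rw [← ENNReal.rpow_mul, one_div, inv_mul_cancel₀ (ne_of_gt hp0), ENNReal.rpow_one]
    rw [h2]
    calc ((∫⁻ x, uncenteredMaximal φ x ^ p ∂μ) ^ (1/p)) ^ p
        ≤ (ENNReal.ofReal C * eLpNorm φ (ENNReal.ofReal p) μ) ^ p :=
          ENNReal.rpow_le_rpow h hp0.le
      _ < ⊤ := ENNReal.rpow_lt_top_of_nonneg hp0.le
          (ENNReal.mul_ne_top ENNReal.ofReal_ne_top hφmem.2.ne)
  set bnd : ℝ → ENNReal := fun x => ENNReal.ofReal K ^ p * uncenteredMaximal φ x ^ p with hbnddef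
  have h_fin : ∫⁻ x, bnd x ∂μ ≠ ⊤ := by
    simp only [hbnddef]
    rw [lintegral_const_mul' _ _ (ENNReal.rpow_ne_top_of_nonneg hp0.le ENNReal.ofReal_ne_top)]
    exact (ENNReal.mul_lt_top
      (ENNReal.rpow_lt_top_of_nonneg hp0.le ENNReal.ofReal_ne_top) hMfin).ne
  have hg_cont : ∀ n, Continuous (g n) := fun n =>
    (continuous_truncated_integral f hfc hsupp _ _ (hab n)).fun_const_smul _
  have hF_meas : ∀ n, Measurable fun x => (‖g n x‖₊ : ENNReal) ^ p := fun n =>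
    ENNReal.continuous_rpow_const.measurable.comp (hg_cont n).measurable.enorm
  have h_bound : ∀ n, (fun x => (‖g n x‖₊ : ENNReal) ^ p) ≤ᵐ[μ] bnd := by
    intro n
    refine Eventually.of_forall fun x => ?_
    dsimp only
    have h1 : ((‖g n x‖₊ : ENNReal)) = ENNReal.ofReal ‖g n x‖ :=
      (ofReal_norm_eq_enorm _).symm
    rw [h1]
    calc ENNReal.ofReal ‖g n x‖ ^ p ≤ ENNReal.ofReal (K / (1 + |x|)) ^ p :=
          ENNReal.rpow_le_rpow (ENNReal.ofReal_le_ofReal (hKb n x)) hp0.le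
      _ = (ENNReal.ofReal K * (ENNReal.ofReal (1 + |x|))⁻¹) ^ p := by
          rw [div_eq_mul_inv, ENNReal.ofReal_mul hK0,
            ENNReal.ofReal_inv_of_pos (by positivity : (0:ℝ) < 1 + |x|)]
      _ = ENNReal.ofReal K ^ p * ((ENNReal.ofReal (1 + |x|))⁻¹) ^ p :=
          ENNReal.mul_rpow_of_nonneg _ _ hp0.le
      _ ≤ bnd x := by
          simp only [hbnddef]
          exact mul_le_mul_right
            (ENNReal.rpow_le_rpow (maximal_indicator_lower x) hp0.le) _
  have h_lim : ∀ x : ℝ, Tendsto (fun n => (‖g n x‖₊ : ENNReal) ^ p) atTop (𝓝 0) := by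
    intro x
    have h1 : Tendsto (fun n => (2 * Real.pi)⁻¹ * (S * (2 * δ n))) atTop (𝓝 0) := by
      have h := hδ.const_mul ((2 * Real.pi)⁻¹ * (S * 2))
      rw [mul_zero] at h
      refine h.congr fun n => by ring
    have h2 : Tendsto (fun y : ℝ => y ^ p) (𝓝 0) (𝓝 0) := by
      have h := (Real.continuousAt_rpow_const 0 p (Or.inr hp0.le)).tendsto
      rwa [Real.zero_rpow (ne_of_gt hp0)] at h
    have hb : Tendsto (fun n => ENNReal.ofReal (((2 * Real.pi)⁻¹ * (S * (2 * δ n))) ^ p))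
        atTop (𝓝 0) := by
      have h := (ENNReal.continuous_ofReal.tendsto 0).comp (h2.comp h1)
      rwa [ENNReal.ofReal_zero] at h
    refine tendsto_of_tendsto_of_tendsto_of_le_of_le tendsto_const_nhds hb
      (fun n => zero_le) fun n => ?_
    have hB1 : ‖g n x‖ ≤ (2 * Real.pi)⁻¹ * (S * (2 * δ n)) := by
      rw [hsm n x]
      refine mul_le_mul_of_nonneg_left ?_ (by positivity)
      have h2' := norm_truncated_integral_le' f _ _ (hab n) x
      rw [← hSdef] at h2'
      refine le_trans h2' (le_of_eq ?_)
      ring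
    calc ((‖g n x‖₊ : ENNReal)) ^ p = ENNReal.ofReal ‖g n x‖ ^ p := by
          exact congrArg (· ^ p) (ofReal_norm_eq_enorm _).symm
      _ ≤ ENNReal.ofReal ((2 * Real.pi)⁻¹ * (S * (2 * δ n))) ^ p :=
          ENNReal.rpow_le_rpow (ENNReal.ofReal_le_ofReal hB1) hp0.le
      _ = ENNReal.ofReal (((2 * Real.pi)⁻¹ * (S * (2 * δ n))) ^ p) :=
          ENNReal.ofReal_rpow_of_nonneg
            (mul_nonneg (inv_nonneg.2 hπ.le) (mul_nonneg hS0 (by linarith [hδ_pos n]))) hp0.le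
  have hDCT := tendsto_lintegral_of_dominated_convergence (μ := μ)
    (f := fun _ => (0 : ENNReal)) bnd hF_meas h_bound h_fin
    (Eventually.of_forall fun x => h_lim x)
  rw [lintegral_zero] at hDCT
  have heq : ∀ n, eLpNorm (g n) (ENNReal.ofReal p) μ =
      (∫⁻ x, (‖g n x‖₊ : ENNReal) ^ p ∂μ) ^ (1/p) := fun n => by
    rw [eLpNorm_eq_lintegral_rpow_enorm_toReal hpne hptop, htoReal]; rfl
  show Tendsto (fun n => eLpNorm (g n) (ENNReal.ofReal p) μ) atTop (𝓝 0)
  simp only [heq]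
  have hcomp := ((ENNReal.continuous_rpow_const (y := 1/p)).tendsto 0).comp hDCT
  rw [ENNReal.zero_rpow_of_pos (by positivity : (0:ℝ) < 1/p)] at hcomp
  simpa only [Function.comp_def] using hcomp
end

section
/- Let a ∈ L^∞(ℝ;ℂ) and let T : L²(ℝ;ℂ) → L²(ℝ;ℂ) be the bounded linear operator T f = F⁻¹(a · F f). If T is compact, then for every t ∈ ℝ, lim_{δ→0⁺} ‖a · χ_{[t−δ, t+δ]}‖_{L^∞(ℝ)} = 0. -/
open MeasureTheory Filter Set

open Function Topology
open scoped ENNReal NNReal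

/-! If the local essential supremum of `a` at `t` stays above some `r > 0`, the set `{|a| > r}`
meets every neighbourhood of `t` in positive measure, hence contains infinitely many pairwise
disjoint sets of positive finite measure. Their normalized indicators form a bounded sequence
which multiplication by `a` maps to an `r`-separated sequence, so this multiplication operator
is not compact. But it is `FL2 ∘ T ∘ FinvL2`, which is compact along with `T`. -/

theorem IsCompactOperator.exists_ne_dist_lt {𝕜 E F : Type*} [NontriviallyNormedField 𝕜]
    [SeminormedAddCommGroup E] [NormedSpace 𝕜 E] [SeminormedAddCommGroup F] [NormedSpace 𝕜 F]
    {T : E →L[𝕜] F} (hT : IsCompactOperator T) {u : ℕ → E} (hu : Bornology.IsBounded (range u))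
    {ε : ℝ} (hε : 0 < ε) : ∃ i j, i ≠ j ∧ dist (T (u i)) (T (u j)) < ε := by
  obtain ⟨K, hK, hTK⟩ := hT.image_subset_compact_of_bounded hu
  obtain ⟨_, _, φ, hφ, hlim⟩ :=
    hK.tendsto_subseq fun n => hTK (mem_image_of_mem T (mem_range_self n))
  obtain ⟨N, hN⟩ := Metric.cauchySeq_iff'.mp hlim.cauchySeq ε hε
  exact ⟨φ (N + 1), φ N, (hφ N.lt_succ_self).ne', hN (N + 1) N.le_succ⟩

theorem Antitone.pairwise_disjoint_on_sdiff_succ {α : Type*} {s : ℕ → Set α} (hs : Antitone s) :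
    Pairwise (Disjoint on fun n => s n \ s (n + 1)) := by
  refine (pairwise_disjoint_on _).mpr fun m n hmn => ?_
  exact disjoint_left.mpr fun x hxm hxn => hxm.2 (hs (Nat.succ_le_of_lt hmn) hxn.1)

lemma volume_inter_Icc_le (A : Set ℝ) (t δ : ℝ) :
    volume (A ∩ Icc (t - δ) (t + δ)) ≤ ENNReal.ofReal (2 * δ) := by
  refine (measure_mono inter_subset_right).trans_eq ?_
  rw [Real.volume_Icc]
  ring_nf

lemma exists_antitone_measure_inter_Icc_strictAnti {A : Set ℝ} {t : ℝ}
    (hpos : ∀ δ, 0 < δ → 0 < volume (A ∩ Icc (t - δ) (t + δ))) :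
    ∃ d : ℕ → ℝ, Antitone d ∧
      StrictAnti fun n => volume (A ∩ Icc (t - d n) (t + d n)) := by
  set m : ℝ → ℝ≥0∞ := fun δ => volume (A ∩ Icc (t - δ) (t + δ))
  have hm_top (δ : ℝ) : m δ ≠ ∞ :=
    ((measure_mono inter_subset_right).trans_lt measure_Icc_lt_top).ne
  have hm_pos {δ : ℝ} (hδ : 0 < δ) : 0 < (m δ).toReal :=
    ENNReal.toReal_pos (hpos δ hδ).ne' (hm_top δ)
  have hm_le {δ : ℝ} (hδ : 0 ≤ δ) : (m δ).toReal ≤ 2 * δ :=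
    ENNReal.toReal_le_of_le_ofReal (by positivity) (volume_inter_Icc_le A t δ)
  -- `m δ ≤ 2 δ`, so shrinking the radius to `m δ / 4` at least halves both the radius and `m`
  set next : ℝ → ℝ := fun δ => (m δ).toReal / 4
  set d : ℕ → ℝ := fun n => next^[n] 1
  have hd_succ (n : ℕ) : d (n + 1) = (m (d n)).toReal / 4 := iterate_succ_apply' next n 1
  have hd_pos (n : ℕ) : 0 < d n := by
    induction n with
    | zero => exact one_pos
    | succ n ih => rw [hd_succ]; exact div_pos (hm_pos ih) four_pos
  refine ⟨d, antitone_nat_of_succ_le fun n => ?_, strictAnti_nat_of_succ_lt fun n => ?_⟩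
  · rw [hd_succ]
    linarith [hm_le (hd_pos n).le, hd_pos n]
  · calc m (d (n + 1)) ≤ ENNReal.ofReal (2 * d (n + 1)) := volume_inter_Icc_le A t _
      _ < ENNReal.ofReal (m (d n)).toReal := by
        rw [ENNReal.ofReal_lt_ofReal_iff (hm_pos (hd_pos n)), hd_succ]
        linarith [hm_pos (hd_pos n)]
      _ = m (d n) := ENNReal.ofReal_toReal (hm_top _)

lemma exists_pairwise_disjoint_subsets_of_measure_inter_Icc_pos {A : Set ℝ} (hA : MeasurableSet A)
    {t : ℝ} (hpos : ∀ δ, 0 < δ → 0 < volume (A ∩ Icc (t - δ) (t + δ))) :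
    ∃ S : ℕ → Set ℝ, Pairwise (Disjoint on S) ∧
      ∀ n, MeasurableSet (S n) ∧ S n ⊆ A ∧ volume (S n) ≠ 0 ∧ volume (S n) ≠ ∞ := by
  obtain ⟨d, hd, hmd⟩ := exists_antitone_measure_inter_Icc_strictAnti hpos
  set K : ℕ → Set ℝ := fun n => A ∩ Icc (t - d n) (t + d n)
  have hK : Antitone K := fun m n hmn =>
    inter_subset_inter_right A (Icc_subset_Icc (by linarith [hd hmn]) (by linarith [hd hmn]))
  refine ⟨fun n => K n \ K (n + 1), hK.pairwise_disjoint_on_sdiff_succ, fun n => ⟨?_, ?_, ?_, ?_⟩⟩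
  · exact (hA.inter measurableSet_Icc).diff (hA.inter measurableSet_Icc)
  · exact sdiff_subset.trans inter_subset_left
  · exact (tsub_pos_of_lt (hmd n.lt_succ_self)).trans_le le_measure_sdiff |>.ne'
  · exact ((measure_mono (sdiff_subset.trans inter_subset_right)).trans_lt measure_Icc_lt_top).ne

section Lp

variable {α 𝕜 : Type*} [MeasurableSpace α] {μ : Measure α} [RCLike 𝕜] {p : ℝ≥0∞} [Fact (1 ≤ p)]

lemma MeasureTheory.Lp.exists_norm_eq_one_ae_eq_zero_of_notMem {s : Set α} (hs : MeasurableSet s)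
    (hμs₀ : μ s ≠ 0) (hμs : μ s ≠ ∞) :
    ∃ u : Lp 𝕜 p μ, ‖u‖ = 1 ∧ ∀ᵐ x ∂μ, x ∉ s → u x = 0 := by
  set v : Lp 𝕜 p μ := indicatorConstLp p hs hμs 1
  have hv : v ≠ 0 := by
    rw [← norm_pos_iff, norm_indicatorConstLp' (zero_lt_one.trans_le Fact.out).ne' hμs₀]
    simp only [norm_one, one_mul]
    exact Real.rpow_pos_of_pos (ENNReal.toReal_pos hμs₀ hμs) _
  refine ⟨(‖v‖ : 𝕜)⁻¹ • v, norm_smul_inv_norm hv, ?_⟩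
  filter_upwards [Lp.coeFn_smul (‖v‖ : 𝕜)⁻¹ v, indicatorConstLp_coeFn (p := p) (hs := hs)
    (hμs := hμs) (c := (1 : 𝕜))] with x hx hvx hxs
  rw [hx, Pi.smul_apply, show v x = _ from hvx, Set.indicator_of_notMem hxs, smul_zero]

lemma le_norm_map_sub_of_ae_eq_mul {M : Lp 𝕜 p μ →L[𝕜] Lp 𝕜 p μ} {a : α → 𝕜}
    (hMa : ∀ u, M u =ᵐ[μ] fun x => a x * u x) {s : Set α} {r : ℝ} (hr : 0 ≤ r)
    (has : ∀ x ∈ s, r ≤ ‖a x‖) {u v : Lp 𝕜 p μ} (hu : ∀ᵐ x ∂μ, x ∉ s → u x = 0)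
    (hv : ∀ᵐ x ∂μ, x ∈ s → v x = 0) : r * ‖u‖ ≤ ‖M u - M v‖ := by
  have hru : r * ‖u‖ = ‖(r : 𝕜) • u‖ := by rw [norm_smul, RCLike.norm_ofReal, abs_of_nonneg hr]
  rw [hru, ← map_sub]
  refine Lp.norm_le_norm_of_ae_le ?_
  filter_upwards [hMa (u - v), Lp.coeFn_sub u v, Lp.coeFn_smul (r : 𝕜) u, hu, hv]
    with x hMx hsub hsmul hux hvx
  rw [hMx, hsub, hsmul]
  by_cases hx : x ∈ s
  · simp only [Pi.sub_apply, Pi.smul_apply, hvx hx, sub_zero, norm_smul, norm_mul,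
      RCLike.norm_ofReal, abs_of_nonneg hr]
    exact mul_le_mul_of_nonneg_right (has x hx) (norm_nonneg _)
  · simp only [Pi.smul_apply, hux hx, smul_zero, norm_zero]
    positivity

end Lp

lemma eLpNorm_indicator_top_le_of_measure_eq_zero {α E : Type*} [MeasurableSpace α]
    {μ : Measure α} [NormedAddCommGroup E] {f : α → E} {s : Set α} {r : ℝ≥0}
    (h : μ ({x | r < ‖f x‖₊} ∩ s) = 0) : eLpNorm (s.indicator f) ⊤ μ ≤ r := by
  rw [eLpNorm_exponent_top]
  refine eLpNormEssSup_le_of_ae_nnnorm_bound ?_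
  filter_upwards [measure_eq_zero_iff_ae_notMem.mp h] with x hx
  by_cases hxs : x ∈ s
  · rw [indicator_of_mem hxs]
    exact not_lt.mp fun hlt => hx ⟨hlt, hxs⟩
  · simp [indicator_of_notMem hxs]

lemma tendsto_eLpNorm_indicator_Icc_of_forall_exists_le {E : Type*} [NormedAddCommGroup E]
    {f : ℝ → E} {p : ℝ≥0∞} {μ : Measure ℝ} {t : ℝ}
    (h : ∀ ε : ℝ≥0∞, 0 < ε → ∃ δ > 0, eLpNorm ((Icc (t - δ) (t + δ)).indicator f) p μ ≤ ε) :
    Tendsto (fun δ => eLpNorm ((Icc (t - δ) (t + δ)).indicator f) p μ) (𝓝[>] 0) (𝓝 0) := by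
  refine ENNReal.tendsto_nhds_zero.mpr fun ε hε => ?_
  obtain ⟨δ, hδ, hle⟩ := h ε hε
  filter_upwards [Ioo_mem_nhdsGT hδ] with δ' hδ'
  refine (eLpNorm_mono fun x => norm_indicator_le_of_subset ?_ f x).trans hle
  exact Icc_subset_Icc (by linarith [hδ'.2]) (by linarith [hδ'.2])

section Multiplier

variable {𝕜 : Type*} [RCLike 𝕜] {p : ℝ≥0∞} [Fact (1 ≤ p)]
  {M : Lp 𝕜 p (volume : Measure ℝ) →L[𝕜] Lp 𝕜 p (volume : Measure ℝ)}

theorem tendsto_eLpNorm_indicator_Icc_of_isCompactOperator_of_measurable {a : ℝ → 𝕜}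
    (ha : Measurable a) (hM : IsCompactOperator M)
    (hMa : ∀ u, M u =ᵐ[volume] fun x => a x * u x) (t : ℝ) :
    Tendsto (fun δ => eLpNorm ((Icc (t - δ) (t + δ)).indicator a) ⊤ volume) (𝓝[>] 0) (𝓝 0) := by
  refine tendsto_eLpNorm_indicator_Icc_of_forall_exists_le fun ε hε => ?_
  obtain ⟨r, hr, hrε⟩ := ENNReal.lt_iff_exists_nnreal_btwn.mp hε
  suffices ∃ δ > 0, eLpNorm ((Icc (t - δ) (t + δ)).indicator a) ⊤ volume ≤ r from
    let ⟨δ, hδ, hle⟩ := this; ⟨δ, hδ, hle.trans hrε.le⟩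
  by_contra! hlarge
  set A : Set ℝ := {x | r < ‖a x‖₊}
  have hA : MeasurableSet A := measurableSet_lt measurable_const ha.nnnorm
  have hpos (δ : ℝ) (hδ : 0 < δ) : 0 < volume (A ∩ Icc (t - δ) (t + δ)) :=
    pos_iff_ne_zero.mpr fun h0 =>
      (hlarge δ hδ).not_ge (eLpNorm_indicator_top_le_of_measure_eq_zero h0)
  obtain ⟨S, hdisj, hS⟩ := exists_pairwise_disjoint_subsets_of_measure_inter_Icc_pos hA hpos
  choose u hu_norm hu_supp using fun n =>
    Lp.exists_norm_eq_one_ae_eq_zero_of_notMem (𝕜 := 𝕜) (p := p) (hS n).1 (hS n).2.2.1 (hS n).2.2.2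
  have hu_bdd : Bornology.IsBounded (range u) :=
    isBounded_iff_forall_norm_le.mpr ⟨1, by rintro _ ⟨n, rfl⟩; exact (hu_norm n).le⟩
  obtain ⟨i, j, hij, hdist⟩ := hM.exists_ne_dist_lt hu_bdd (ENNReal.coe_pos.mp hr)
  have hsep : (r : ℝ) * ‖u i‖ ≤ ‖M (u i) - M (u j)‖ := by
    refine le_norm_map_sub_of_ae_eq_mul hMa r.coe_nonneg (fun x hx => ((hS i).2.1 hx).le)
      (hu_supp i) ?_
    filter_upwards [hu_supp j] with x hx hxi using hx (disjoint_left.mp (hdisj hij) hxi)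
  rw [hu_norm i, mul_one, ← dist_eq_norm] at hsep
  exact hsep.not_gt hdist

theorem tendsto_eLpNorm_indicator_Icc_of_isCompactOperator {a : ℝ → 𝕜}
    (ha : AEStronglyMeasurable a volume) (hM : IsCompactOperator M)
    (hMa : ∀ u, M u =ᵐ[volume] fun x => a x * u x) (t : ℝ) :
    Tendsto (fun δ => eLpNorm ((Icc (t - δ) (t + δ)).indicator a) ⊤ volume) (𝓝[>] 0) (𝓝 0) := by
  have hMa' (u : Lp 𝕜 p volume) : M u =ᵐ[volume] fun x => ha.mk a x * u x := by
    filter_upwards [hMa u, ha.ae_eq_mk] with x hMx hx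
    rw [hMx, hx]
  refine (tendsto_eLpNorm_indicator_Icc_of_isCompactOperator_of_measurable
    ha.stronglyMeasurable_mk.measurable hM hMa' t).congr fun δ => eLpNorm_congr_ae ?_
  filter_upwards [ha.ae_eq_mk] with x hx
  by_cases hxs : x ∈ Icc (t - δ) (t + δ) <;> simp [hxs, hx]

end Multiplier

theorem compactness_implies_local_esssup_infinitesimal_general
    (a : ℝ → ℂ) (ha : MemLp a ⊤ (volume : Measure ℝ))
    (FL2 FinvL2 : Lp ℂ 2 (volume : Measure ℝ) →L[ℂ] Lp ℂ 2 (volume : Measure ℝ))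
    (hinv₂ : ∀ u, FL2 (FinvL2 u) = u)
    (T : Lp ℂ 2 (volume : Measure ℝ) →L[ℂ] Lp ℂ 2 (volume : Measure ℝ))
    (hT : ∀ (f : Lp ℂ 2 (volume : Measure ℝ))
      (hg : MemLp (fun x => a x * (FL2 f : ℝ → ℂ) x) 2 volume),
      T f = FinvL2 (hg.toLp _)) :
    IsCompactOperator T → ∀ t : ℝ, Tendsto (fun δ : ℝ =>
      eLpNorm ((Set.Icc (t - δ) (t + δ)).indicator a) ⊤ (volume : Measure ℝ))
      (nhdsWithin 0 (Set.Ioi 0)) (nhds 0) := by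
  intro hTc
  refine tendsto_eLpNorm_indicator_Icc_of_isCompactOperator (M := FL2 ∘L T ∘L FinvL2) ha.1
    ((hTc.comp_clm FinvL2).clm_comp FL2) fun u => ?_
  have hau : MemLp (fun x => a x * (FL2 (FinvL2 u) : ℝ → ℂ) x) 2 volume := by
    rw [hinv₂]
    exact (Lp.memLp u).smul ha
  rw [ContinuousLinearMap.comp_apply, ContinuousLinearMap.comp_apply, hT _ hau, hinv₂]
  filter_upwards [hau.coeFn_toLp] with x hx
  rw [hx, hinv₂]

/-- Let `a ∈ L^∞(ℝ;ℂ)` and let `T : L²(ℝ;ℂ) → L²(ℝ;ℂ)` be the bounded linear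
operator `T f = F⁻¹(a · F f)`, where `F` is the extension of the Fourier transform to `L²`
by Plancherel's theorem (here `FL2` and `FinvL2` are the extensions of `F` and `F⁻¹` to
`L²`, characterized by agreeing a.e. with the integral formulas on `L¹ ∩ L²` and being
mutually inverse). If `T` is compact, then for every `t ∈ ℝ`,
`lim_{δ→0⁺} ‖a · χ_{[t−δ, t+δ]}‖_{L^∞(ℝ)} = 0`. -/
theorem compactness_implies_local_esssup_infinitesimal
    (a : ℝ → ℂ) (ha : MemLp a ⊤ (volume : Measure ℝ))
    (FL2 FinvL2 : Lp ℂ 2 (volume : Measure ℝ) →L[ℂ] Lp ℂ 2 (volume : Measure ℝ))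
    (hFL2 : ∀ (f : ℝ → ℂ) (hf1 : Integrable f volume) (hf2 : MemLp f 2 volume),
      (FL2 (hf2.toLp f) : ℝ → ℂ) =ᵐ[volume] Ftransform f)
    (hFinvL2 : ∀ (g : ℝ → ℂ) (hg1 : Integrable g volume) (hg2 : MemLp g 2 volume),
      (FinvL2 (hg2.toLp g) : ℝ → ℂ) =ᵐ[volume] Finv g)
    (hinv₁ : ∀ u, FinvL2 (FL2 u) = u) (hinv₂ : ∀ u, FL2 (FinvL2 u) = u)
    (T : Lp ℂ 2 (volume : Measure ℝ) →L[ℂ] Lp ℂ 2 (volume : Measure ℝ))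
    (hT : ∀ (f : Lp ℂ 2 (volume : Measure ℝ))
      (hg : MemLp (fun x => a x * (FL2 f : ℝ → ℂ) x) 2 volume),
      T f = FinvL2 (hg.toLp _)) :
    IsCompactOperator T → ∀ t : ℝ, Tendsto (fun δ : ℝ =>
      eLpNorm ((Set.Icc (t - δ) (t + δ)).indicator a) ⊤ (volume : Measure ℝ))
      (nhdsWithin 0 (Set.Ioi 0)) (nhds 0) :=
  compactness_implies_local_esssup_infinitesimal_general a ha FL2 FinvL2 hinv₂ T hT
end
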